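/- arXiv:2301.07611 — 7 statements merged into one kernel-verified Lean document; each statement's English description precedes it below -/
import Mathlib

section
/- For every fixed r ∈ ℝ, the function e : ℝ³ → ℝ defined by e(u) = (1/2)‖u‖² − (1/4)(min(r − u₃, 0))² is (1/2)-strongly convex on ℝ³; that is, for all u, v ∈ ℝ³ and all θ ∈ [0,1], e(θu + (1−θ)v) ≤ θ e(u) + (1−θ) e(v) − θ(1−θ)·(1/4)·‖u − v‖². -/
/-!
With `ψ(s) = min(r − s, 0)²`, the function `s ↦ s² − ψ(s)` is `s²` up to `r` and its tangent line
beyond, hence convex; i.e. `ψ` is `(−2)`-strongly concave. Precomposing with the 1-Lipschitz linear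
map `u ↦ u₃` preserves this, so `e − ¼‖·‖² = ¼(‖·‖² − ψ(u₃))` is convex, which is
`(1/2)`-strong convexity of `e`.
-/

open Set

lemma convexOn_sq_sub_sq_min (r : ℝ) :
    ConvexOn ℝ univ fun s : ℝ ↦ s ^ 2 - min (r - s) 0 ^ 2 := by
  have hpart : ConvexOn ℝ univ fun s : ℝ ↦ max (r - s) 0 ^ 2 :=
    (((convexOn_const r convex_univ).sub (concaveOn_id convex_univ)).sup
      (convexOn_const 0 convex_univ)).pow (fun s _ ↦ le_max_right (r - s) 0) 2
  have haff : ConvexOn ℝ univ fun s : ℝ ↦ 2 * r * s - r ^ 2 :=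
    ((LinearMap.mul ℝ ℝ (2 * r)).convexOn convex_univ).add_const (-r ^ 2)
  -- `s² − min(r − s, 0)² = (2rs − r²) + max(r − s, 0)²`
  refine (haff.add hpart).congr fun s _ ↦ ?_
  rcases le_total r s with h | h
  · simp only [Pi.add_apply, min_eq_left (sub_nonpos.2 h), max_eq_right (sub_nonpos.2 h)]; ring
  · simp only [Pi.add_apply, min_eq_right (sub_nonneg.2 h), max_eq_left (sub_nonneg.2 h)]; ring

lemma strongConcaveOn_sq_min (r : ℝ) :
    StrongConcaveOn univ (-2) fun s : ℝ ↦ min (r - s) 0 ^ 2 := by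
  refine strongConcaveOn_iff_convex.2 <| (convexOn_sq_sub_sq_min r).neg.congr fun s _ ↦ ?_
  simp only [Pi.neg_apply, Real.norm_eq_abs, sq_abs]
  ring

lemma StrongConcaveOn.comp_linearMap {E F : Type*} [NormedAddCommGroup E] [NormedSpace ℝ E]
    [NormedAddCommGroup F] [NormedSpace ℝ F] {s : Set F} {m : ℝ} {g : F → ℝ}
    (hg : StrongConcaveOn s m g) (hm : m ≤ 0) (ℓ : E →ₗ[ℝ] F) (hℓ : ∀ x, ‖ℓ x‖ ≤ ‖x‖) :
    StrongConcaveOn (ℓ ⁻¹' s) m (g ∘ ℓ) := by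
  refine ⟨hg.1.linear_preimage ℓ, fun x hx y hy a b ha hb hab ↦ ?_⟩
  have hmod : m / 2 * ‖x - y‖ ^ 2 ≤ m / 2 * ‖ℓ x - ℓ y‖ ^ 2 := by
    rw [← map_sub]
    exact mul_le_mul_of_nonpos_left (by gcongr; exact hℓ _) (by linarith)
  calc a • g (ℓ x) + b • g (ℓ y) + a * b * (m / 2 * ‖x - y‖ ^ 2)
      ≤ a • g (ℓ x) + b • g (ℓ y) + a * b * (m / 2 * ‖ℓ x - ℓ y‖ ^ 2) := by
        gcongr
    _ ≤ g (a • ℓ x + b • ℓ y) := hg.2 hx hy ha hb hab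
    _ = (g ∘ ℓ) (a • x + b • y) := by simp

lemma strongConvexOn_half_norm_sq_sub_quarter_sq_min {E : Type*} [NormedAddCommGroup E]
    [InnerProductSpace ℝ E] (r : ℝ) (ℓ : E →ₗ[ℝ] ℝ) (hℓ : ∀ x, ‖ℓ x‖ ≤ ‖x‖) :
    StrongConvexOn univ (1 / 2) fun u ↦ 1 / 2 * ‖u‖ ^ 2 - 1 / 4 * min (r - ℓ u) 0 ^ 2 := by
  have hψ := (strongConcaveOn_sq_min r).comp_linearMap (by norm_num) ℓ hℓ
  rw [preimage_univ] at hψ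
  refine strongConvexOn_iff_convex.2 <|
    ((strongConcaveOn_iff_convex.1 hψ).neg.smul (by norm_num : (0 : ℝ) ≤ 1 / 4)).congr
      fun u _ ↦ ?_
  simp only [Pi.neg_apply, Function.comp_apply, smul_eq_mul]
  ring

/-- The energy density `e(u) = (1/2)‖u‖² − (1/4)(min(r − u₃, 0))²` is
`(1/2)`-strongly convex on `ℝ³`. -/
theorem energy_density_strongly_convex (r : ℝ)
    (e : EuclideanSpace ℝ (Fin 3) → ℝ)
    (he : ∀ u, e u = (1/2) * ‖u‖^2 - (1/4) * (min (r - u 2) 0)^2) :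
    ∀ (u v : EuclideanSpace ℝ (Fin 3)) (θ : ℝ), θ ∈ Set.Icc (0:ℝ) 1 →
      e (θ • u + (1 - θ) • v) ≤
        θ * e u + (1 - θ) * e v - θ * (1 - θ) * (1/4) * ‖u - v‖^2 := by
  have hconv := strongConvexOn_half_norm_sq_sub_quarter_sq_min r
    (EuclideanSpace.proj (𝕜 := ℝ) (2 : Fin 3)).toLinearMap fun u ↦ PiLp.norm_apply_le u 2
  intro u v θ ⟨hθ₀, hθ₁⟩
  have := hconv.2 (mem_univ u) (mem_univ v) hθ₀ (sub_nonneg.2 hθ₁) (add_sub_cancel θ 1)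
  simp only [smul_eq_mul, ContinuousLinearMap.coe_coe, PiLp.proj_apply] at this
  simp only [he]
  linarith
end

section
/- Let PV, M : ℝ → ℝ be smooth and 2π-periodic, and let A : ℝ → ℝ satisfy A′(x) = PV(x) for every x. For m ∈ ℝ put φ_m(x) = x + (1/2) min(m − x, 0) and let ψ_m(x) = x − min(m − x, 0) denote its inverse. Define Θ̃(x) := ψ_{M(x)}(A(x)) and c := (1/(2π)) ∫_{−π}^{π} Θ̃(t) dt. Then for every x ∈ ℝ the identity (Θ̃(x) − c) + (1/2) min((M(x) − c) − (Θ̃(x) − c), 0) = A(x) − c holds. Consequently, the function p(x) := ∫_{−π}^{x} (Θ̃(t) − c) dt is differentiable with p′ = Θ̃ − c, and the flux x ↦ p′(x) + (1/2) min((M(x) − c) − p′(x), 0) has derivative PV(x) at every x ∈ ℝ; i.e., p is a one-dimensional solution of PV-and-M inversion with data PV and M − c. -/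
open Real

/-- Explicit one-dimensional solutions of PV-and-M inversion: with
`Θ̃ := ψ_{M(x)}(A(x)) = A(x) − min(M(x) − A(x), 0)` (where `A′ = PV`) and
`c` the average of `Θ̃` over a period, the function `p(x) = ∫_{−π}^x (Θ̃ − c)`
solves `(p′ + (1/2) min((M − c) − p′, 0))′ = PV`. -/
theorem explicit_one_dimensional_solutions (PV M A : ℝ → ℝ)
    (hPV : ContDiff ℝ (⊤ : ℕ∞) PV) (hM : ContDiff ℝ (⊤ : ℕ∞) M)
    (hPVper : Function.Periodic PV (2 * π)) (hMper : Function.Periodic M (2 * π))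
    (hA : ∀ x, HasDerivAt A (PV x) x)
    (Θ : ℝ → ℝ) (hΘ : ∀ x, Θ x = A x - min (M x - A x) 0)
    (c : ℝ) (hc : c = (1 / (2 * π)) * ∫ t in (-π)..π, Θ t)
    (p : ℝ → ℝ) (hp : ∀ x, p x = ∫ t in (-π)..x, (Θ t - c)) :
    (∀ x, (Θ x - c) + (1/2) * min ((M x - c) - (Θ x - c)) 0 = A x - c) ∧
    (∀ x, HasDerivAt p (Θ x - c) x) ∧
    (∀ x, HasDerivAt (fun y => deriv p y + (1/2) * min ((M y - c) - deriv p y) 0)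
      (PV x) x) := by
  have key : ∀ x, (Θ x - c) + (1/2) * min ((M x - c) - (Θ x - c)) 0 = A x - c := by
    intro x
    rw [hΘ x]
    rcases le_or_gt (M x - A x) 0 with h | h
    · rw [min_eq_left h]
      have : M x - c - (A x - (M x - A x) - c) = 2 * (M x - A x) := by ring
      rw [this, min_eq_left (by linarith)]
      ring
    · rw [min_eq_right h.le]
      have : M x - c - (A x - 0 - c) = M x - A x := by ring
      rw [this, min_eq_right h.le]
      ring
  have hAcont : Continuous A := by
    have : Differentiable ℝ A := fun x => (hA x).differentiableAt
    exact this.continuous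
  have hΘcont : Continuous (fun t => Θ t - c) := by
    have : Continuous Θ := by
      have h2 : Continuous (fun x => A x - min (M x - A x) 0) :=
        hAcont.sub ((hM.continuous.sub hAcont).min continuous_const)
      exact h2.congr fun x => (hΘ x).symm
    exact this.sub continuous_const
  have hderiv : ∀ x, HasDerivAt p (Θ x - c) x := by
    intro x
    have h1 : HasDerivAt (fun y => ∫ t in (-π)..y, (Θ t - c)) (Θ x - c) x := by
      exact (hΘcont.integral_hasStrictDerivAt (-π) x).hasDerivAt
    exact h1.congr_of_eventuallyEq (Filter.Eventually.of_forall fun y => hp y)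
  refine ⟨key, hderiv, fun x => ?_⟩
  have hpd : ∀ y, deriv p y = Θ y - c := fun y => (hderiv y).deriv
  have heq : (fun y => deriv p y + (1/2) * min ((M y - c) - deriv p y) 0)
      = fun y => A y - c := by
    funext y
    rw [hpd y]
    exact key y
  rw [heq]
  exact (hA x).sub_const c
end

section
/- Let M : ℝ → ℝ be smooth and 2π-periodic with M(x) < 0 for x ∈ (−π, 0), M(0) = 0, M(x) > 0 for x ∈ (0, π), and M′(0) ≠ 0. Set c := (1/(2π)) ∫_{−π}^{π} min(M(t), 0) dt and Θ(x) := c − min(M(x), 0). Then: (i) for every x ∈ ℝ, Θ(x) + (1/2) min((M(x) + c) − Θ(x), 0) = c; (ii) Θ is Lipschitz continuous on ℝ; (iii) Θ is not differentiable at 0. In particular, p(x) := ∫_{−π}^{x} Θ(t) dt satisfies p′ = Θ, solves one-dimensional PV-and-M inversion with PV ≡ 0 and data M + c, and its derivative is Lipschitz but not differentiable at 0, so p ∈ C^{1,1} but p ∉ C². -/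
open Real

/-- Sharpness of the regularity theory: for `M` smooth, `2π`-periodic, negative on `(−π, 0)`,
vanishing at `0`, positive on `(0, π)`, with `M′(0) ≠ 0`, the function
`Θ := c − min(M, 0)` (where `c` is the average of `min(M, 0)`) satisfies the constant-flux
identity, is Lipschitz, but is not differentiable at `0`; hence `p := ∫_{−π}^{·} Θ` solves
one-dimensional PV-and-M inversion with `PV ≡ 0` and data `M + c`, and `p` is `C^{1,1}`
but not `C²`. -/
theorem sharpness_one_dimensional (M : ℝ → ℝ)
    (hM : ContDiff ℝ (⊤ : ℕ∞) M) (hMper : Function.Periodic M (2 * π))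
    (hneg : ∀ x ∈ Set.Ioo (-π) (0:ℝ), M x < 0) (h0 : M 0 = 0)
    (hpos : ∀ x ∈ Set.Ioo (0:ℝ) π, 0 < M x) (hM' : deriv M 0 ≠ 0)
    (c : ℝ) (hc : c = (1 / (2 * π)) * ∫ t in (-π)..π, min (M t) 0)
    (Θ : ℝ → ℝ) (hΘ : ∀ x, Θ x = c - min (M x) 0)
    (p : ℝ → ℝ) (hp : ∀ x, p x = ∫ t in (-π)..x, Θ t) :
    (∀ x, Θ x + (1/2) * min ((M x + c) - Θ x) 0 = c) ∧
    (∃ K : NNReal, LipschitzWith K Θ) ∧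
    ¬ DifferentiableAt ℝ Θ 0 ∧
    (∀ x, HasDerivAt p (Θ x) x) ∧
    (∀ x, deriv p x + (1/2) * min ((M x + c) - deriv p x) 0 = c) ∧
    (∃ K : NNReal, LipschitzWith K (deriv p)) ∧
    ¬ DifferentiableAt ℝ (deriv p) 0 := by
  -- (i) flux identity
  have hflux : ∀ x, Θ x + (1/2) * min ((M x + c) - Θ x) 0 = c := by
    intro x
    rw [hΘ]
    rcases le_or_gt (M x) 0 with h | h
    · rw [min_eq_left h]
      have : (M x + c) - (c - M x) = 2 * M x := by ring
      rw [this, min_eq_left (by linarith)]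
      ring
    · rw [min_eq_right h.le]
      have : (M x + c) - (c - 0) = M x := by ring
      rw [this, min_eq_right h.le]
      ring
  -- (ii) Lipschitz
  have hMdiff : Differentiable ℝ M := hM.differentiable (by simp)
  have hM'cont : Continuous (deriv M) := hM.continuous_deriv (by simp)
  have hders : Bornology.IsBounded (Set.range (deriv M)) := by
    have hper' : Function.Periodic (deriv M) (2 * π) := by
      intro x
      have h1 : (fun y => M (y + 2 * π)) = M := funext hMper
      calc deriv M (x + 2 * π) = deriv (fun y => M (y + 2 * π)) x :=
            (deriv_comp_add_const ..).symm
        _ = deriv M x := by rw [h1]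
    exact hper'.isBounded_of_continuous (by positivity) hM'cont
  obtain ⟨C, hC⟩ := (isBounded_iff_forall_norm_le).1 hders
  have hC0 : 0 ≤ C := le_trans (norm_nonneg _) (hC _ ⟨0, rfl⟩)
  have hMlip : LipschitzWith ⟨C, hC0⟩ M := by
    apply lipschitzWith_of_nnnorm_deriv_le hMdiff
    intro x
    have := hC (deriv M x) ⟨x, rfl⟩
    exact (NNReal.coe_le_coe (r₁ := ‖deriv M x‖₊) (r₂ := (⟨C, hC0⟩ : NNReal))).1 (by rw [coe_nnnorm]; exact this)
  have hΘlip : LipschitzWith ⟨C, hC0⟩ Θ := by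
    apply LipschitzWith.of_dist_le_mul
    intro x y
    show dist (Θ x) (Θ y) ≤ C * dist x y
    calc dist (Θ x) (Θ y) = dist (min (M x) 0) (min (M y) 0) := by
          rw [hΘ x, hΘ y, dist_sub_left]
      _ ≤ dist (M x) (M y) := by
          rw [Real.dist_eq, Real.dist_eq]
          refine (abs_min_sub_min_le_max (M x) 0 (M y) 0).trans ?_
          simp
      _ ≤ C * dist x y := hMlip.dist_le_mul x y
  -- (iii) not differentiable at 0
  have hndiff : ¬ DifferentiableAt ℝ Θ 0 := by
    intro h
    have hπ : (0:ℝ) < π := pi_pos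
    -- right side: Θ = c on [0, π)
    have hright : Θ =ᶠ[nhdsWithin 0 (Set.Ici 0)] fun _ => c := by
      filter_upwards [Ico_mem_nhdsGE_of_mem (by constructor <;> simp [hπ] : (0:ℝ) ∈ Set.Ico 0 π)]
        with x hx
      rcases eq_or_lt_of_le hx.1 with h' | h'
      · rw [hΘ, ← h', h0]; simp
      · rw [hΘ, min_eq_right (hpos x ⟨h', hx.2⟩).le]; ring
    have hΘ0 : Θ 0 = c := by rw [hΘ, h0]; simp
    have hr : HasDerivWithinAt Θ 0 (Set.Ici 0) 0 :=
      (hasDerivWithinAt_const 0 _ c).congr_of_eventuallyEq hright hΘ0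
    have hr' : HasDerivWithinAt Θ (deriv Θ 0) (Set.Ici 0) 0 :=
      h.hasDerivAt.hasDerivWithinAt
    have hu1 : UniqueDiffWithinAt ℝ (Set.Ici (0:ℝ)) 0 := uniqueDiffOn_Ici 0 0 Set.self_mem_Ici
    have e1 : deriv Θ 0 = 0 := by
      rw [← hr'.derivWithin hu1, hr.derivWithin hu1]
    -- left side: Θ = c - M on (-π, 0]
    have hleft : Θ =ᶠ[nhdsWithin 0 (Set.Iic 0)] fun x => c - M x := by
      filter_upwards [Ioc_mem_nhdsLE_of_mem
        (by constructor <;> simp [hπ] : (0:ℝ) ∈ Set.Ioc (-π) 0)] with x hx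
      rcases eq_or_lt_of_le hx.2 with h' | h'
      · rw [hΘ, h', h0]; simp
      · rw [hΘ, min_eq_left (hneg x ⟨hx.1, h'⟩).le]
    have hl : HasDerivWithinAt Θ (0 - deriv M 0) (Set.Iic 0) 0 := by
      have : HasDerivAt (fun x => c - M x) (0 - deriv M 0) 0 :=
        (hasDerivAt_const 0 c).sub (hMdiff 0).hasDerivAt
      exact this.hasDerivWithinAt.congr_of_eventuallyEq hleft (by rw [hΘ0, h0]; ring)
    have hl' : HasDerivWithinAt Θ (deriv Θ 0) (Set.Iic 0) 0 :=
      h.hasDerivAt.hasDerivWithinAt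
    have hu2 : UniqueDiffWithinAt ℝ (Set.Iic (0:ℝ)) 0 := uniqueDiffOn_Iic 0 0 Set.self_mem_Iic
    have e2 : deriv Θ 0 = 0 - deriv M 0 := by
      rw [← hl'.derivWithin hu2, hl.derivWithin hu2]
    apply hM'
    rw [e1] at e2
    linarith
  -- (iv) FTC
  have hΘcont : Continuous Θ := hΘlip.continuous
  have hd : ∀ x, HasDerivAt p (Θ x) x := by
    intro x
    have hpf : p = fun y => ∫ t in (-π)..y, Θ t := funext hp
    rw [hpf]
    exact intervalIntegral.integral_hasDerivAt_right
      (hΘcont.intervalIntegrable _ _)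
      (hΘcont.stronglyMeasurableAtFilter _ _)
      hΘcont.continuousAt
  have hderiv : deriv p = Θ := funext fun x => (hd x).deriv
  refine ⟨hflux, ⟨_, hΘlip⟩, hndiff, hd, ?_, ?_, ?_⟩
  · rw [hderiv]; exact hflux
  · rw [hderiv]; exact ⟨_, hΘlip⟩
  · rw [hderiv]; exact hndiff
end

section
/- Define M : ℝ → ℝ by M(x) = sin x − 1/π and Θ : ℝ → ℝ by Θ(x) = −min(sin x, 0) − 1/π. Then for every x ∈ ℝ the identity Θ(x) + (1/2) min(M(x) − Θ(x), 0) = −1/π holds; moreover Θ is Lipschitz continuous on ℝ but not differentiable at 0. Hence p(x) := ∫_{−π}^{x} Θ(t) dt solves one-dimensional PV-and-M inversion with PV ≡ 0 and data M, and p is C^{1,1} but not C². -/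
open Real

/-- The "baseball cap" example: `M(x) = sin x − 1/π`, `Θ(x) = −min(sin x, 0) − 1/π`.
Then the flux `Θ + (1/2) min(M − Θ, 0)` is the constant `−1/π`, `Θ` is Lipschitz but
not differentiable at `0`, so `p := ∫_{−π}^{·} Θ` solves one-dimensional PV-and-M
inversion with `PV ≡ 0` and data `M`, and `p` is `C^{1,1}` but not `C²`. -/
theorem baseball_cap_example (M Θ : ℝ → ℝ)
    (hM : ∀ x, M x = Real.sin x - 1/π)
    (hΘ : ∀ x, Θ x = -min (Real.sin x) 0 - 1/π)
    (p : ℝ → ℝ) (hp : ∀ x, p x = ∫ t in (-π)..x, Θ t) :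
    (∀ x, Θ x + (1/2) * min (M x - Θ x) 0 = -(1/π)) ∧
    (∃ K : NNReal, LipschitzWith K Θ) ∧
    ¬ DifferentiableAt ℝ Θ 0 ∧
    (∀ x, HasDerivAt p (Θ x) x) ∧
    (∀ x, deriv p x + (1/2) * min (M x - deriv p x) 0 = -(1/π)) ∧
    ¬ DifferentiableAt ℝ (deriv p) 0 := by
  have hflux : ∀ x, Θ x + (1/2) * min (M x - Θ x) 0 = -(1/π) := by
    intro x
    rw [hM, hΘ]
    rcases le_or_gt 0 (Real.sin x) with h | h
    · rw [min_eq_right h]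
      have : min (Real.sin x - 1/π - (-0 - 1/π)) 0 = 0 := by
        rw [min_eq_right]; linarith
      rw [this]; ring
    · rw [min_eq_left h.le]
      have : min (Real.sin x - 1/π - (-Real.sin x - 1/π)) 0
          = Real.sin x - 1/π - (-Real.sin x - 1/π) := by
        rw [min_eq_left]; linarith
      rw [this]; ring
  have hΘfun : Θ = fun x => -min (Real.sin x) 0 - 1/π := funext hΘ
  have hcont : Continuous Θ := by
    rw [hΘfun]
    exact ((Real.continuous_sin.min continuous_const).neg).sub continuous_const
  have hsinlip : LipschitzWith 1 Real.sin := by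
    apply lipschitzWith_of_nnnorm_deriv_le Real.differentiable_sin
    intro x
    rw [Real.deriv_sin]
    have h1 : ‖Real.cos x‖ ≤ (1:ℝ) := by
      rw [Real.norm_eq_abs]; exact Real.abs_cos_le_one x
    exact_mod_cast h1
  have h1 : LipschitzWith 1 (fun x : ℝ => min (Real.sin x) 0) := by
    simpa using hsinlip.min (LipschitzWith.const (0:ℝ))
  have hlip : ∃ K : NNReal, LipschitzWith K Θ := by
    refine ⟨1, LipschitzWith.of_dist_le_mul fun x y => ?_⟩
    have h2 := h1.dist_le_mul x y
    rw [hΘ x, hΘ y]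
    simp only [Real.dist_eq, NNReal.coe_one, one_mul] at h2 ⊢
    calc |(-min (Real.sin x) 0 - 1/π) - (-min (Real.sin y) 0 - 1/π)|
        = |min (Real.sin x) 0 - min (Real.sin y) 0| := by
          rw [show (-min (Real.sin x) 0 - 1/π) - (-min (Real.sin y) 0 - 1/π)
              = -(min (Real.sin x) 0 - min (Real.sin y) 0) by ring, abs_neg]
      _ ≤ |x - y| := h2
  -- not differentiable at 0
  have hndiff : ¬ DifferentiableAt ℝ Θ 0 := by
    intro h
    have hd := h.hasDerivAt
    set d := deriv Θ 0 with hdd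
    -- right side: Θ = -1/π on Ici 0 near 0
    have hmemR : Set.Ico (0:ℝ) π ∈ nhdsWithin (0:ℝ) (Set.Ici 0) := by
      have h1 : Set.Iio π ∈ nhds (0:ℝ) := Iio_mem_nhds Real.pi_pos
      have h2 : Set.Iio π ∩ Set.Ici 0 ∈ nhdsWithin (0:ℝ) (Set.Ici 0) :=
        Filter.inter_mem (mem_nhdsWithin_of_mem_nhds h1) self_mem_nhdsWithin
      simpa [Set.Iio_inter_Ici, Set.Ico] using h2
    have hΘ0 : Θ 0 = -(1/π) := by simp [hΘ 0]
    have hRe : (fun _ : ℝ => -(1/π)) =ᶠ[nhdsWithin (0:ℝ) (Set.Ici 0)] Θ := by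
      refine Filter.eventuallyEq_of_mem hmemR fun x hx => ?_
      have hs : 0 ≤ Real.sin x := Real.sin_nonneg_of_nonneg_of_le_pi hx.1 hx.2.le
      simp [hΘ x, min_eq_right hs]
    have hR : HasDerivWithinAt (fun _ : ℝ => -(1/π)) d (Set.Ici 0) 0 :=
      (hd.hasDerivWithinAt).congr_of_eventuallyEq hRe hΘ0.symm
    have hR0 : HasDerivWithinAt (fun _ : ℝ => -(1/π)) 0 (Set.Ici 0) 0 :=
      (hasDerivWithinAt_const _ _ _)
    have hd0 : d = 0 := (uniqueDiffOn_Ici (0:ℝ) 0 Set.self_mem_Ici).eq_deriv _ hR hR0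
    -- left side: Θ = -sin - 1/π on Iic 0 near 0
    have hmemL : Set.Ioc (-π) (0:ℝ) ∈ nhdsWithin (0:ℝ) (Set.Iic 0) := by
      have h1 : Set.Ioi (-π) ∈ nhds (0:ℝ) := Ioi_mem_nhds (by linarith [Real.pi_pos])
      have h2 : Set.Ioi (-π) ∩ Set.Iic 0 ∈ nhdsWithin (0:ℝ) (Set.Iic 0) :=
        Filter.inter_mem (mem_nhdsWithin_of_mem_nhds h1) self_mem_nhdsWithin
      simpa [Set.Ioi_inter_Iic] using h2
    have hLe : (fun x : ℝ => -Real.sin x - 1/π) =ᶠ[nhdsWithin (0:ℝ) (Set.Iic 0)] Θ := by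
      refine Filter.eventuallyEq_of_mem hmemL fun x hx => ?_
      have hs : Real.sin x ≤ 0 := by
        have h1 : 0 ≤ Real.sin (-x) :=
          Real.sin_nonneg_of_nonneg_of_le_pi (by linarith [hx.2]) (by linarith [hx.1])
        rw [Real.sin_neg] at h1; linarith
      simp [hΘ x, min_eq_left hs]
    have hL : HasDerivWithinAt (fun x : ℝ => -Real.sin x - 1/π) d (Set.Iic 0) 0 :=
      (hd.hasDerivWithinAt).congr_of_eventuallyEq hLe (by simpa using hΘ0.symm)
    have hL1 : HasDerivWithinAt (fun x : ℝ => -Real.sin x - 1/π) (-1) (Set.Iic 0) 0 := by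
      have := ((Real.hasDerivAt_sin 0).neg.sub_const (1/π))
      simpa using this.hasDerivWithinAt
    have hd1 : d = -1 := (uniqueDiffOn_Iic (0:ℝ) 0 Set.self_mem_Iic).eq_deriv _ hL hL1
    rw [hd0] at hd1
    norm_num at hd1
  -- derivative of p
  have hpfun : p = fun x => ∫ t in (-π)..x, Θ t := funext hp
  have hderiv : ∀ x, HasDerivAt p (Θ x) x := by
    intro x
    rw [hpfun]
    exact intervalIntegral.integral_hasDerivAt_right
      (hcont.intervalIntegrable _ _)
      (hcont.stronglyMeasurableAtFilter _ _)
      hcont.continuousAt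
  have hderiveq : deriv p = Θ := funext fun x => (hderiv x).deriv
  refine ⟨hflux, hlip, hndiff, hderiv, ?_, ?_⟩
  · intro x; rw [hderiveq]; exact hflux x
  · rw [hderiveq]; exact hndiff
end

section
/- Let φ be a standard centered mollifier and define F : ℝ → ℝ by F(x) := x/2 + (1/2) ∫_{x}^{1} (x − y) φ(y) dy − (1/2) ∫_{−1}^{x} (x − y) φ(y) dy, and for ε > 0 define F_ε(x) := x/2 + (1/2) ∫_{x}^{ε} (x − y) φ_ε(y) dy − (1/2) ∫_{−ε}^{x} (x − y) φ_ε(y) dy. Then F_ε(x) = ε F(x/ε) for all x and ε > 0, and F satisfies: F(−1) = −1, F(1) = 0, F is twice differentiable with F′(−1) = 1, F′(1) = 0, and F″(x) = −φ(x) for every x ∈ ℝ; in particular F″ ≤ 0 and the support of F″ is contained in (−1, 1). -/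
open MeasureTheory

/-- Properties of the profile `F` of the regularised minimum: `F_ε(x) = ε F(x/ε)`,
`F(−1) = −1`, `F(1) = 0`, `F` is twice differentiable with `F′(−1) = 1`, `F′(1) = 0`,
and `F″ = −φ`; in particular `F″ ≤ 0` with support contained in `(−1, 1)`. -/
theorem properties_of_F (φ : ℝ → ℝ)
    (hsm : ContDiff ℝ (⊤ : ℕ∞) φ) (hnn : ∀ y, 0 ≤ φ y)
    (hsupp : Function.support φ ⊆ Set.Ioo (-1 : ℝ) 1)
    (hnorm : (∫ y, φ y) = 1) (hcent : (∫ y, y * φ y) = 0)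
    (F : ℝ → ℝ)
    (hF : ∀ x, F x = x/2 + (1/2) * (∫ y in x..(1:ℝ), (x - y) * φ y)
        - (1/2) * (∫ y in (-1:ℝ)..x, (x - y) * φ y))
    (Fε : ℝ → ℝ → ℝ)
    (hFε : ∀ ε, 0 < ε → ∀ x, Fε ε x = x/2
        + (1/2) * (∫ y in x..ε, (x - y) * (ε⁻¹ * φ (y/ε)))
        - (1/2) * (∫ y in (-ε)..x, (x - y) * (ε⁻¹ * φ (y/ε)))) :
    (∀ ε, 0 < ε → ∀ x, Fε ε x = ε * F (x / ε)) ∧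
    F (-1) = -1 ∧ F 1 = 0 ∧
    (∀ x, DifferentiableAt ℝ F x) ∧
    (∀ x, DifferentiableAt ℝ (deriv F) x) ∧
    deriv F (-1) = 1 ∧ deriv F 1 = 0 ∧
    (∀ x, deriv (deriv F) x = -φ x) ∧
    (∀ x, deriv (deriv F) x ≤ 0) ∧
    Function.support (deriv (deriv F)) ⊆ Set.Ioo (-1 : ℝ) 1 := by
  have hc : Continuous φ := hsm.continuous
  have hcy : Continuous fun y => y * φ y := continuous_id.mul hc
  -- normalisation on the interval
  have hA : (∫ y in (-1:ℝ)..1, φ y) = 1 := by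
    rw [intervalIntegral.integral_eq_integral_of_support_subset
      (hsupp.trans Set.Ioo_subset_Ioc_self), hnorm]
  have hsupp' : Function.support (fun y => y * φ y) ⊆ Set.Ioo (-1 : ℝ) 1 := by
    intro y hy
    apply hsupp
    intro h
    simp only [Function.mem_support, h, mul_zero, ne_eq, not_true_eq_false] at hy
  have hB : (∫ y in (-1:ℝ)..1, y * φ y) = 0 := by
    rw [intervalIntegral.integral_eq_integral_of_support_subset
      (hsupp'.trans Set.Ioo_subset_Ioc_self), hcent]
  set G : ℝ → ℝ := fun x => ∫ t in (-1:ℝ)..x, φ t with hGdef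
  set H : ℝ → ℝ := fun x => ∫ t in (-1:ℝ)..x, t * φ t with hHdef
  -- splitting of the integrals
  have split : ∀ a b x : ℝ, (∫ y in a..b, (x - y) * φ y)
      = x * (∫ y in a..b, φ y) - ∫ y in a..b, y * φ y := by
    intro a b x
    rw [← intervalIntegral.integral_const_mul, ← intervalIntegral.integral_sub (f := fun y => x * φ y)
      ((continuous_const.mul hc : Continuous fun y => x * φ y).intervalIntegrable _ _) (hcy.intervalIntegrable _ _)]
    congr 1
    ext y
    ring
  have hGx : ∀ x : ℝ, (∫ y in x..1, φ y) = 1 - G x := by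
    intro x
    have := intervalIntegral.integral_add_adjacent_intervals (μ := volume)
      (hc.intervalIntegrable (-1) x) (hc.intervalIntegrable x 1)
    rw [hA] at this
    simp only [hGdef]
    linarith
  have hHx : ∀ x : ℝ, (∫ y in x..1, y * φ y) = - H x := by
    intro x
    have := intervalIntegral.integral_add_adjacent_intervals (μ := volume)
      (hcy.intervalIntegrable (-1) x) (hcy.intervalIntegrable x 1)
    rw [hB] at this
    simp only [hHdef]
    linarith
  -- closed form for F
  have key : ∀ x, F x = x - x * G x + H x := by
    intro x
    rw [hF x, split, split, hGx, hHx]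
    ring
  -- derivatives of G and H
  have hG : ∀ x, HasDerivAt G (φ x) x := fun x =>
    intervalIntegral.integral_hasDerivAt_right (hc.intervalIntegrable _ _)
      hc.aestronglyMeasurable.stronglyMeasurableAtFilter hc.continuousAt
  have hH : ∀ x, HasDerivAt H (x * φ x) x := fun x =>
    intervalIntegral.integral_hasDerivAt_right (hcy.intervalIntegrable _ _)
      hcy.aestronglyMeasurable.stronglyMeasurableAtFilter hcy.continuousAt
  have hF' : ∀ x, HasDerivAt F (1 - G x) x := by
    intro x
    have h : HasDerivAt (fun x => x - x * G x + H x)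
        (1 - (1 * G x + x * φ x) + x * φ x) x :=
      ((hasDerivAt_id x).sub ((hasDerivAt_id x).mul (hG x))).add (hH x)
    have h2 : HasDerivAt F (1 - (1 * G x + x * φ x) + x * φ x) x := by
      apply h.congr_of_eventuallyEq
      filter_upwards with y using (key y)
    convert h2 using 1
    ring
  have hderivF : deriv F = fun x => 1 - G x := funext fun x => (hF' x).deriv
  have hF'' : ∀ x, HasDerivAt (deriv F) (-φ x) x := by
    intro x
    rw [hderivF]
    have := (hasDerivAt_const x (1:ℝ)).sub (hG x)
    rw [zero_sub] at this
    exact this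
  have hD2 : ∀ x, deriv (deriv F) x = -φ x := fun x => (hF'' x).deriv
  have hGneg1 : G (-1) = 0 := intervalIntegral.integral_same
  have hHneg1 : H (-1) = 0 := intervalIntegral.integral_same
  refine ⟨?_, ?_, ?_, fun x => (hF' x).differentiableAt,
      fun x => (hF'' x).differentiableAt, ?_, ?_, hD2,
      fun x => by rw [hD2]; simpa using hnn x, ?_⟩
  · -- scaling
    intro ε hε x
    have hεne : ε ≠ 0 := hε.ne'
    have comp : ∀ a b : ℝ, (∫ y in a..b, (x - y) * (ε⁻¹ * φ (y/ε)))
        = ε * ∫ u in a/ε..b/ε, (x/ε - u) * φ u := by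
      intro a b
      have e1 : ∀ y : ℝ, (x - y) * (ε⁻¹ * φ (y/ε))
          = (fun u => (x - ε * u) * (ε⁻¹ * φ u)) (y/ε) := by
        intro y
        simp only
        rw [mul_div_cancel₀ _ hεne]
      calc (∫ y in a..b, (x - y) * (ε⁻¹ * φ (y/ε)))
          = ∫ y in a..b, (fun u => (x - ε * u) * (ε⁻¹ * φ u)) (y/ε) :=
            intervalIntegral.integral_congr (fun y _ => e1 y)
        _ = ε • ∫ u in a/ε..b/ε, (x - ε * u) * (ε⁻¹ * φ u) :=
            intervalIntegral.integral_comp_div (fun u => (x - ε * u) * (ε⁻¹ * φ u)) hεne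
        _ = ε * ∫ u in a/ε..b/ε, (x/ε - u) * φ u := by
            rw [smul_eq_mul]
            congr 1
            apply intervalIntegral.integral_congr
            intro u _
            field_simp
    rw [hFε ε hε x, hF (x/ε), comp, comp]
    have h1 : x/ε/ε⁻¹ = x := by field_simp
    have h2 : ε/ε = (1:ℝ) := div_self hεne
    have h3 : (-ε)/ε = (-1:ℝ) := by rw [neg_div, h2]
    rw [h2, h3]
    field_simp
  · rw [key, hGneg1, hHneg1]; ring
  · rw [key]
    have : G 1 = 1 := hA
    have : H 1 = 0 := hB
    rw [‹G 1 = 1›, ‹H 1 = 0›]; ring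
  · rw [hderivF]; simp [hGneg1]
  · rw [hderivF]
    have : G 1 = 1 := hA
    simp [this]
  · intro x hx
    rw [Function.mem_support, hD2, neg_ne_zero] at hx
    exact hsupp hx
end

section
/- Let B_θ, B_q, C_θ, C_q be strictly positive real constants, and set N_u² := B_θ C_θ + B_q C_q and N_s² := B_θ C_θ. Let P, θ, q, M be real numbers, let H_u := 1 if q < 0 and H_u := 0 otherwise, and let H_s := 1 − H_u. Suppose that P = B_θ·θ − B_q·q·H_u (hydrostatic balance) and M = q + (C_q/C_θ)·θ (definition of the moist variable). Then: (i) q = C_q·(H_u/N_u² + H_s/N_s²)·((B_θ C_θ/C_q)·M − P); (ii) θ/C_θ = (1/N_u²)·(P + B_q·M)·H_u + (1/N_s²)·P·H_s; and (iii) θ/C_θ = (1/N_s²)·P + (1/N_s² − 1/N_u²)·min((B_θ C_θ/C_q)·M − P, 0). -/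
/-- Pointwise algebraic identities (Rosetta stone, general constants): under hydrostatic
balance `P = B_θ θ − B_q q H_u` and `M = q + (C_q/C_θ) θ`, with `N_u² = B_θC_θ + B_qC_q`
and `N_s² = B_θC_θ`, one can express `q` and `θ` in terms of `M` and `P`. -/
theorem rosetta_identities (Bθ Bq Cθ Cq : ℝ)
    (hBθ : 0 < Bθ) (hBq : 0 < Bq) (hCθ : 0 < Cθ) (hCq : 0 < Cq)
    (P θ q M Hu Hs : ℝ)
    (hHu : Hu = if q < 0 then 1 else 0) (hHs : Hs = 1 - Hu)
    (hhyd : P = Bθ * θ - Bq * q * Hu)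
    (hM : M = q + (Cq / Cθ) * θ) :
    q = Cq * (Hu / (Bθ*Cθ + Bq*Cq) + Hs / (Bθ*Cθ)) * ((Bθ*Cθ/Cq) * M - P) ∧
    θ / Cθ = (1/(Bθ*Cθ + Bq*Cq)) * (P + Bq * M) * Hu + (1/(Bθ*Cθ)) * P * Hs ∧
    θ / Cθ = (1/(Bθ*Cθ)) * P
      + (1/(Bθ*Cθ) - 1/(Bθ*Cθ + Bq*Cq)) * min ((Bθ*Cθ/Cq) * M - P) 0 := by
  have hNu : (0:ℝ) < Bθ*Cθ + Bq*Cq := by positivity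
  have hNs : (0:ℝ) < Bθ*Cθ := by positivity
  subst hHs hM hhyd
  by_cases hq : q < 0
  · simp only [hHu, if_pos hq]
    have hexpr : (Bθ*Cθ/Cq) * (q + Cq / Cθ * θ) - (Bθ * θ - Bq * q * 1)
        = q * (Bθ*Cθ + Bq*Cq) / Cq := by field_simp; ring
    have hmin : min ((Bθ*Cθ/Cq) * (q + Cq / Cθ * θ) - (Bθ * θ - Bq * q * 1)) 0
        = (Bθ*Cθ/Cq) * (q + Cq / Cθ * θ) - (Bθ * θ - Bq * q * 1) := by
      apply min_eq_left
      rw [hexpr]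
      apply div_nonpos_of_nonpos_of_nonneg
      · exact mul_nonpos_of_nonpos_of_nonneg hq.le hNu.le
      · exact hCq.le
    refine ⟨?_, ?_, ?_⟩ <;> (try rw [hmin]) <;> field_simp <;> ring
  · simp only [hHu, if_neg hq]
    push_neg at hq
    have hexpr : (Bθ*Cθ/Cq) * (q + Cq / Cθ * θ) - (Bθ * θ - Bq * q * 0)
        = q * (Bθ*Cθ) / Cq := by field_simp; ring
    have hmin : min ((Bθ*Cθ/Cq) * (q + Cq / Cθ * θ) - (Bθ * θ - Bq * q * 0)) 0 = 0 := by
      apply min_eq_right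
      rw [hexpr]; positivity
    refine ⟨?_, ?_, ?_⟩ <;> (try rw [hmin]) <;> field_simp <;> ring
end

section
/- Let P, θ, q, M be real numbers with P = θ − q·H_u where H_u := 1 if q < 0 and H_u := 0 otherwise, and with M = θ + q. Then θ² + q²·H_u = P² + (1/2)·(M + P)·min(M − P, 0). Consequently, for any vector v ∈ ℝ³ with third component v₃ = P, writing u := (−v₂, v₁, 0) (geostrophic velocity), one has ‖u‖² + θ² + q²·H_u = ‖v‖² + (1/2)·(M + v₃)·min(M − v₃, 0). -/
/-- Pointwise rewriting of the conserved energy density: under `P = θ − q H_u` and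
`M = θ + q`, `θ² + q² H_u = P² + (1/2)(M + P) min(M − P, 0)`; consequently for the
geostrophic velocity `u = (−v₂, v₁, 0)` associated with `v` whose third component is `P`,
`‖u‖² + θ² + q² H_u = ‖v‖² + (1/2)(M + v₃) min(M − v₃, 0)`. -/
theorem conserved_energy_rewriting (P θ q M Hu : ℝ)
    (hHu : Hu = if q < 0 then 1 else 0)
    (hhyd : P = θ - q * Hu) (hM : M = θ + q) :
    θ^2 + q^2 * Hu = P^2 + (1/2) * (M + P) * min (M - P) 0 ∧
    ∀ (v u : EuclideanSpace ℝ (Fin 3)), v 2 = P →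
      u 0 = -(v 1) → u 1 = v 0 → u 2 = 0 →
      ‖u‖^2 + θ^2 + q^2 * Hu = ‖v‖^2 + (1/2) * (M + v 2) * min (M - v 2) 0 := by
  have key : θ^2 + q^2 * Hu = P^2 + (1/2) * (M + P) * min (M - P) 0 := by
    by_cases h : q < 0
    · simp only [h, if_pos] at hHu
      subst hHu
      have hmin : min (M - P) 0 = M - P := by
        apply min_eq_left
        nlinarith
      rw [hmin]; subst hM hhyd; ring
    · simp only [h, if_neg, not_false_iff] at hHu
      subst hHu
      have hmin : min (M - P) 0 = 0 := by
        apply min_eq_right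
        push_neg at h
        nlinarith
      rw [hmin]; subst hM hhyd; ring
  refine ⟨key, fun v u hv h0 h1 h2 => ?_⟩
  have hnu : ‖u‖^2 = (v 1)^2 + (v 0)^2 := by
    rw [EuclideanSpace.norm_eq]
    rw [Real.sq_sqrt (by positivity)]
    simp [Fin.sum_univ_three, h0, h1, h2, sq]
  have hnv : ‖v‖^2 = (v 0)^2 + (v 1)^2 + (v 2)^2 := by
    rw [EuclideanSpace.norm_eq]
    rw [Real.sq_sqrt (by positivity)]
    simp [Fin.sum_univ_three, sq]
  rw [hnu, hnv, hv]
  linarith [key]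
end
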